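/- Let R be a commutative ring, e : J ⟶ R an idal of R-modules, and x ∈ Spec R a prime such that the localization e_x : J_x ⟶ R_x is surjective. Then e_x is an isomorphism. Consequently, the set X_J = {x ∈ Spec R : e_x is an isomorphism} equals the complement of V(e(J)), i.e. X_J = {x : e(J) ⊄ x}, and is open in Spec R. -/

import Mathlib

/-!
Everything hinges on whether some value `a = e x` lies in `S` (for `S = R ∖ p`: whether
`e(J) ⊄ p`). If so, `a` becomes a unit in `R_S` and `e_S` is surjective; conversely a preimage
of `1` produces such an `x`. The idal identity `a • y = e y • x` shows that `e_S y = 0` forces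
`y = 0` in `J_S`, so `e_S` is then also injective.
-/

universe u

/-- The localization of a linear map `e : J ⟶ R` at a submonoid `S`, as a map
`J_S ⟶ R_S` of localized modules. -/
noncomputable def locMap {R : Type u} [CommRing R] {J : Type u} [AddCommGroup J]
    [Module R J] (S : Submonoid R) (e : J →ₗ[R] R) :
    LocalizedModule S J →ₗ[R] LocalizedModule S R :=
  IsLocalizedModule.map S (LocalizedModule.mkLinearMap S J)
    (LocalizedModule.mkLinearMap S R) e

namespace LocalizedModule

theorem mk_eq_zero_iff {R M : Type*} [CommSemiring R] [AddCommMonoid M] [Module R M]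
    {S : Submonoid R} {m : M} {s : S} : mk m s = 0 ↔ ∃ u : S, u • m = 0 := by
  rw [← zero_mk 1, mk_eq]
  simp only [one_smul, smul_zero]

end LocalizedModule

open LocalizedModule

section

variable {R J : Type u} [CommRing R] [AddCommGroup J] [Module R J] {S : Submonoid R}
  {e : J →ₗ[R] R}

theorem locMap_mk (x : J) (s : S) : locMap S e (mk x s) = mk (e x) s :=
  IsLocalizedModule.map_LocalizedModules S _ x s

theorem exists_apply_mem_of_surjective_locMap (h : Function.Surjective (locMap S e)) :
    ∃ x, e x ∈ S := by
  obtain ⟨z, hz⟩ := h (mk 1 1)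
  induction z using induction_on with
  | h x s =>
    obtain ⟨u, hu⟩ := mk_eq.mp ((locMap_mk x s).symm.trans hz)
    simp only [one_smul, Submonoid.smul_def, smul_eq_mul, mul_one] at hu
    refine ⟨(u : R) • x, ?_⟩
    rw [map_smul, smul_eq_mul, hu]
    exact (u * s).2

theorem surjective_locMap_of_apply_mem {x : J} (hx : e x ∈ S) :
    Function.Surjective (locMap S e) := by
  intro z
  induction z using induction_on with
  | h r s =>
    refine ⟨mk (r • x) (s * ⟨e x, hx⟩), ?_⟩
    rw [locMap_mk, map_smul, smul_eq_mul, mul_comm]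
    exact mk_cancel_common_right s ⟨e x, hx⟩ r

theorem injective_locMap_of_apply_mem (hidal : ∀ x y : J, e x • y = e y • x) {x : J}
    (hx : e x ∈ S) : Function.Injective (locMap S e) := by
  rw [injective_iff_map_eq_zero]
  intro z hz
  induction z using induction_on with
  | h y t =>
    rw [locMap_mk, mk_eq_zero_iff] at hz
    obtain ⟨u, hu⟩ := hz
    rw [mk_eq_zero_iff]
    refine ⟨⟨e x, hx⟩ * u, ?_⟩
    rw [Submonoid.smul_def] at hu
    rw [mul_smul, Submonoid.mk_smul, Submonoid.smul_def, hidal, map_smul, hu, zero_smul]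

theorem bijective_locMap_iff (hidal : ∀ x y : J, e x • y = e y • x) :
    Function.Bijective (locMap S e) ↔ ∃ x, e x ∈ S :=
  ⟨fun h => exists_apply_mem_of_surjective_locMap h.2, fun ⟨_, hx⟩ =>
    ⟨injective_locMap_of_apply_mem hidal hx, surjective_locMap_of_apply_mem hx⟩⟩

end

theorem exists_apply_mem_primeCompl_iff {R M : Type*} [CommRing R] [AddCommMonoid M]
    [Module R M] (e : M →ₗ[R] R) (p : Ideal R) [p.IsPrime] :
    (∃ x, e x ∈ p.primeCompl) ↔ ¬ LinearMap.range e ≤ p := by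
  simp [SetLike.le_def, Ideal.primeCompl]

theorem PrimeSpectrum.isOpen_setOf_not_le {R : Type*} [CommRing R] (I : Ideal R) :
    IsOpen {p : PrimeSpectrum R | ¬ I ≤ p.asIdeal} :=
  (isClosed_zeroLocus (I : Set R)).isOpen_compl

/-- Let `e : J ⟶ R` be an idal.  At any prime `p` where the localization `e_p` is
surjective, it is an isomorphism.  Consequently the locus
`X_J = {p : e_p is an isomorphism}` equals the complement of `V(e(J))`, i.e. the set
of primes not containing the image ideal, and is open in `Spec R`. -/
theorem idal_localization_iso_locus {R : Type u} [CommRing R] {J : Type u}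
    [AddCommGroup J] [Module R J] (e : J →ₗ[R] R)
    (hidal : ∀ x y : J, e x • y = e y • x) :
    (∀ p : PrimeSpectrum R,
        Function.Surjective ⇑(locMap p.asIdeal.primeCompl e) →
        Function.Bijective ⇑(locMap p.asIdeal.primeCompl e)) ∧
    {p : PrimeSpectrum R | Function.Bijective ⇑(locMap p.asIdeal.primeCompl e)} =
      {p : PrimeSpectrum R | ¬ LinearMap.range e ≤ p.asIdeal} ∧
    IsOpen {p : PrimeSpectrum R | Function.Bijective ⇑(locMap p.asIdeal.primeCompl e)} := by
  have locus_eq :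
      {p : PrimeSpectrum R | Function.Bijective ⇑(locMap p.asIdeal.primeCompl e)} =
        {p : PrimeSpectrum R | ¬ LinearMap.range e ≤ p.asIdeal} := by
    ext p
    exact (bijective_locMap_iff hidal).trans (exists_apply_mem_primeCompl_iff e p.asIdeal)
  refine ⟨fun p h => (bijective_locMap_iff hidal).mpr
    (exists_apply_mem_of_surjective_locMap h), locus_eq, ?_⟩
  rw [locus_eq]
  exact PrimeSpectrum.isOpen_setOf_not_le _
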